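/- arXiv:1906.00271 — 5 statements merged into one kernel-verified Lean document; each statement's English description precedes it below -/
import Mathlib

section
/- For all real numbers x, y, k with k > 0 and x ≠ y, the ratio (√(x² + k) − √(y² + k))² / (x − y)² is at most 1 − 1/√((x²/k + 1)(y²/k + 1)). -/
/-! With `a = √(x² + k)` and `b = √(y² + k)` the right-hand side is `1 - k / (a b)`, so after
clearing denominators the claim is `(a - b)² · a b ≤ (a b - k)(x - y)²`. Using `a² = x² + k`,
`b² = y² + k` and Lagrange's identity `(x² + k)(y² + k) = (x y + k)² + k (x - y)²`, the difference
of the two sides is the square `(a b - x y - k)²`. -/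

lemma sqrt_div_add_one_mul_div_add_one {x y k : ℝ} (hk : 0 < k) :
    √((x ^ 2 / k + 1) * (y ^ 2 / k + 1)) = √(x ^ 2 + k) * √(y ^ 2 + k) / k := by
  have h : (x ^ 2 / k + 1) * (y ^ 2 / k + 1) = (x ^ 2 + k) * (y ^ 2 + k) / k ^ 2 := by
    field_simp
  rw [h, Real.sqrt_div' _ (by positivity), Real.sqrt_mul (by positivity),
    Real.sqrt_sq hk.le]

lemma sub_sq_mul_add_sq_eq_of_sq_eq_add {a b x y k : ℝ} (ha : a ^ 2 = x ^ 2 + k)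
    (hb : b ^ 2 = y ^ 2 + k) :
    (a - b) ^ 2 * (a * b) + (a * b - x * y - k) ^ 2 = (a * b - k) * (x - y) ^ 2 := by
  linear_combination (a * b - b ^ 2) * ha + (a * b - x ^ 2 - k) * hb

theorem stmt_0 (x y k : ℝ) (hk : 0 < k) (hxy : x ≠ y) :
    (Real.sqrt (x ^ 2 + k) - Real.sqrt (y ^ 2 + k)) ^ 2 / (x - y) ^ 2 ≤
      1 - 1 / Real.sqrt ((x ^ 2 / k + 1) * (y ^ 2 / k + 1)) := by
  rw [sqrt_div_add_one_mul_div_add_one hk]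
  set a := √(x ^ 2 + k)
  set b := √(y ^ 2 + k)
  have hab : 0 < a * b := by positivity
  have hxy2 : 0 < (x - y) ^ 2 := by positivity [sub_ne_zero.2 hxy]
  have key := sub_sq_mul_add_sq_eq_of_sq_eq_add (a := a) (b := b)
    (Real.sq_sqrt (by positivity)) (Real.sq_sqrt (by positivity))
  rw [one_div_div, one_sub_div hab.ne', div_le_div_iff₀ hxy2 hab]
  linarith [sq_nonneg (a * b - x * y - k)]
end

section
/- For all real numbers x, y, k with k > 0, one has √(x² + k)·√(y² + k) ≥ x·y + k, with equality if and only if x = y. -/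
/-!
Lagrange's identity `(x² + k)(y² + k) = (xy + k)² + k(x - y)²` exhibits the product under the
square root as `(xy + k)²` plus a term that is nonnegative, and vanishes only when `x = y`.
-/

theorem sq_add_mul_sq_add {R : Type*} [CommRing R] (x y k : R) :
    (x ^ 2 + k) * (y ^ 2 + k) = (x * y + k) ^ 2 + k * (x - y) ^ 2 := by
  ring

namespace Real

variable {x y k : ℝ}

lemma sqrt_sq_add_mul_sqrt_sq_add (hk : 0 ≤ k) :
    √(x ^ 2 + k) * √(y ^ 2 + k) = √((x * y + k) ^ 2 + k * (x - y) ^ 2) := by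
  rw [← sq_add_mul_sq_add, sqrt_mul (by positivity)]

lemma mul_add_le_sqrt_sq_add_mul_sqrt_sq_add (hk : 0 ≤ k) :
    x * y + k ≤ √(x ^ 2 + k) * √(y ^ 2 + k) := by
  rw [sqrt_sq_add_mul_sqrt_sq_add hk]
  exact (le_abs_self _).trans (abs_le_sqrt (le_add_of_nonneg_right (by positivity)))

lemma sqrt_sq_add_mul_sqrt_sq_add_eq_iff (hk : 0 < k) :
    √(x ^ 2 + k) * √(y ^ 2 + k) = x * y + k ↔ x = y := by
  constructor
  · intro h
    have hnonneg : 0 ≤ x * y + k := h ▸ by positivity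
    rw [sqrt_sq_add_mul_sqrt_sq_add hk.le, sqrt_eq_iff_eq_sq (by positivity) hnonneg,
      add_eq_left, mul_eq_zero, pow_eq_zero_iff two_ne_zero, sub_eq_zero] at h
    exact h.resolve_left hk.ne'
  · rintro rfl
    rw [mul_self_sqrt (by positivity)]
    ring

end Real

theorem stmt_2 (x y k : ℝ) (hk : 0 < k) :
    x * y + k ≤ Real.sqrt (x ^ 2 + k) * Real.sqrt (y ^ 2 + k) ∧
      (Real.sqrt (x ^ 2 + k) * Real.sqrt (y ^ 2 + k) = x * y + k ↔ x = y) :=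
  ⟨Real.mul_add_le_sqrt_sq_add_mul_sqrt_sq_add hk.le, Real.sqrt_sq_add_mul_sqrt_sq_add_eq_iff hk⟩
end

section
/- For any real symmetric d × d matrices X and Y and any λ > 0, letting A(M) = √(MᵀM + (4/λ)I), one has ‖A(X) − A(Y)‖_F ≤ α_λ ‖X − Y‖_F, where α_λ = 1 − (1/2)·((λ/4)·Λ_max(X)² + 1)^{-1/2}·((λ/4)·Λ_max(Y)² + 1)^{-1/2} and Λ_max(M) denotes the largest absolute value of an eigenvalue of M. In particular 0 < α_λ < 1. -/
open scoped Matrix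

/-- Frobenius norm of a matrix. -/
noncomputable def frobNorm {d : ℕ} (A : Matrix (Fin d) (Fin d) ℝ) : ℝ :=
  Real.sqrt (∑ i, ∑ j, (A i j) ^ 2)

/-- Largest eigenvalue in absolute value of a Hermitian matrix. -/
noncomputable def lamMax {d : ℕ} {X : Matrix (Fin d) (Fin d) ℝ} (hX : X.IsHermitian) : ℝ :=
  ⨆ i, |hX.eigenvalues i|

/-- The removed Mathlib definition `Matrix.PosSemidef.sqrt` (Mathlib, Dec 2024), restated verbatim. -/
noncomputable def Matrix.PosSemidef.sqrt {n : Type*} {𝕜 : Type*} [Fintype n] [RCLike 𝕜]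
    [PartialOrder 𝕜] [StarOrderedRing 𝕜] [DecidableEq n] {A : Matrix n n 𝕜} (hA : A.PosSemidef) : Matrix n n 𝕜 :=
  (hA.1.eigenvectorUnitary : Matrix n n 𝕜) *
    Matrix.diagonal (fun i => ((Real.sqrt (hA.1.eigenvalues i) : ℝ) : 𝕜)) *
    (star hA.1.eigenvectorUnitary : Matrix n n 𝕜)


/-! Diagonalize `X = U diag(a) U⋆` and `Y = V diag(b) V⋆`. With `c = 4/λ` the square root is
`A(X) = U diag(√(aᵢ² + c)) U⋆`, so after multiplying by `U⋆` on the left and `V` on the right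
(which preserves the Frobenius norm) the entries of `A(X) - A(Y)` and `X - Y` are
`(√(aᵢ² + c) - √(bⱼ² + c)) Wᵢⱼ` and `(aᵢ - bⱼ) Wᵢⱼ` for the same `W = U⋆V`. It remains to prove the
scalar bound `|√(a² + c) - √(b² + c)| ≤ α_λ |a - b|` for `|a| ≤ Λ_max(X)`, `|b| ≤ Λ_max(Y)`: divide
`(u - v)(u + v) = (a - b)(a + b)` by `u + v`, where `u = √(a² + c)`, `v = √(b² + c)`, and use
`|a| ≤ u - c / (2u)`. -/

lemma abs_le_sqrt_sq_add_sub_div {c : ℝ} (hc : 0 < c) (a : ℝ) :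
    |a| ≤ √(a ^ 2 + c) - c / (2 * √(a ^ 2 + c)) := by
  have hu : 0 < √(a ^ 2 + c) := Real.sqrt_pos.mpr (by positivity)
  have hu2 : √(a ^ 2 + c) ^ 2 = a ^ 2 + c := Real.sq_sqrt (by positivity)
  rw [le_sub_iff_add_le, ← le_sub_iff_add_le', div_le_iff₀ (by positivity)]
  nlinarith [sq_nonneg (√(a ^ 2 + c) - |a|), sq_abs a, abs_nonneg a]

lemma abs_sqrt_sq_add_sub_sqrt_sq_add_le {a b L M c : ℝ} (hc : 0 < c)
    (ha : |a| ≤ L) (hb : |b| ≤ M) :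
    |√(a ^ 2 + c) - √(b ^ 2 + c)| ≤
      (1 - c / (2 * (√(L ^ 2 + c) * √(M ^ 2 + c)))) * |a - b| := by
  set u := √(a ^ 2 + c)
  set v := √(b ^ 2 + c)
  have hu : 0 < u := Real.sqrt_pos.mpr (by positivity)
  have hv : 0 < v := Real.sqrt_pos.mpr (by positivity)
  have huL : u ≤ √(L ^ 2 + c) := Real.sqrt_le_sqrt (by nlinarith [sq_abs a, abs_nonneg a])
  have hvM : v ≤ √(M ^ 2 + c) := Real.sqrt_le_sqrt (by nlinarith [sq_abs b, abs_nonneg b])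
  have hdiff : |u - v| * (u + v) = |a - b| * |a + b| := by
    rw [← abs_of_pos (by positivity : 0 < u + v), ← abs_mul, ← abs_mul]
    congr 1
    nlinarith [Real.sq_sqrt (by positivity : 0 ≤ a ^ 2 + c),
      Real.sq_sqrt (by positivity : 0 ≤ b ^ 2 + c)]
  have hsum : |a + b| ≤ (1 - c / (2 * (√(L ^ 2 + c) * √(M ^ 2 + c)))) * (u + v) := by
    have hsum_uv : |a| + |b| ≤ (1 - c / (2 * (u * v))) * (u + v) := by
      have e : u - c / (2 * u) + (v - c / (2 * v)) = (1 - c / (2 * (u * v))) * (u + v) := by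
        field_simp; ring
      linarith [abs_le_sqrt_sq_add_sub_div hc a, abs_le_sqrt_sq_add_sub_div hc b]
    have hcoef : c / (2 * (√(L ^ 2 + c) * √(M ^ 2 + c))) ≤ c / (2 * (u * v)) := by
      gcongr
    nlinarith [abs_add_le a b]
  refine le_of_mul_le_mul_right ?_ (by positivity : 0 < u + v)
  rw [hdiff]
  linarith [mul_le_mul_of_nonneg_left hsum (abs_nonneg (a - b))]

namespace Matrix

variable {n : Type*} [Fintype n]

lemma sum_sq_eq_trace (M : Matrix n n ℝ) : ∑ i, ∑ j, M i j ^ 2 = (Mᴴ * M).trace := by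
  simp only [trace, diag, mul_apply, conjTranspose_apply, star_trivial, sq]
  exact Finset.sum_comm

variable [DecidableEq n]

lemma sum_sq_star_mul_mul {U V : Matrix n n ℝ} (hU : U ∈ unitaryGroup n ℝ)
    (hV : V ∈ unitaryGroup n ℝ) (M : Matrix n n ℝ) :
    ∑ i, ∑ j, (star U * M * V) i j ^ 2 = ∑ i, ∑ j, M i j ^ 2 := by
  have hUU : U * star U = 1 := mem_unitaryGroup_iff.mp hU
  have hVV : V * star V = 1 := mem_unitaryGroup_iff.mp hV
  have hstar : (star U * M * V)ᴴ = star V * Mᴴ * U := by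
    simp [star_eq_conjTranspose, Matrix.mul_assoc]
  rw [sum_sq_eq_trace, sum_sq_eq_trace, hstar]
  calc (star V * Mᴴ * U * (star U * M * V)).trace
      = (star V * (Mᴴ * (U * star U) * M) * V).trace := by simp only [Matrix.mul_assoc]
    _ = (Mᴴ * M).trace := by rw [hUU, Matrix.mul_one, trace_mul_cycle, hVV, Matrix.one_mul]

lemma star_mul_conj_diagonal_sub_mul_apply {U V : Matrix n n ℝ} (hU : U ∈ unitaryGroup n ℝ)
    (hV : V ∈ unitaryGroup n ℝ) (a b : n → ℝ) (i j : n) :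
    (star U * (U * diagonal a * star U - V * diagonal b * star V) * V) i j =
      (a i - b j) * (star U * V) i j := by
  have hUU : star U * U = 1 := mem_unitaryGroup_iff'.mp hU
  have hVV : star V * V = 1 := mem_unitaryGroup_iff'.mp hV
  have h : star U * (U * diagonal a * star U - V * diagonal b * star V) * V =
      diagonal a * (star U * V) - (star U * V) * diagonal b := by
    simp only [Matrix.mul_sub, Matrix.sub_mul, Matrix.mul_assoc, hVV]
    rw [← Matrix.mul_assoc (star U) U, hUU, Matrix.one_mul, Matrix.mul_one]
  rw [h, sub_apply, diagonal_mul, mul_diagonal, sub_mul, mul_comm (b j)]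

lemma sum_sq_conj_diagonal_sub_le {U V : Matrix n n ℝ} (hU : U ∈ unitaryGroup n ℝ)
    (hV : V ∈ unitaryGroup n ℝ) {a b f g : n → ℝ} {α : ℝ}
    (h : ∀ i j, |f i - g j| ≤ α * |a i - b j|) :
    ∑ i, ∑ j, (U * diagonal f * star U - V * diagonal g * star V) i j ^ 2 ≤
      α ^ 2 * ∑ i, ∑ j, (U * diagonal a * star U - V * diagonal b * star V) i j ^ 2 := by
  rw [← sum_sq_star_mul_mul hU hV, ← sum_sq_star_mul_mul hU hV (U * _ * _ - _),
    Finset.mul_sum]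
  refine Finset.sum_le_sum fun i _ => ?_
  rw [Finset.mul_sum]
  refine Finset.sum_le_sum fun j _ => ?_
  simp only [star_mul_conj_diagonal_sub_mul_apply hU hV]
  have hsq : (f i - g j) ^ 2 ≤ α ^ 2 * (a i - b j) ^ 2 := by
    simpa only [sq_abs, mul_pow] using pow_le_pow_left₀ (abs_nonneg _) (h i j) 2
  nlinarith [sq_nonneg ((star U * V) i j)]

lemma IsHermitian.eq_conj_diagonal_eigenvalues {X : Matrix n n ℝ} (hX : X.IsHermitian) :
    X = (hX.eigenvectorUnitary : Matrix n n ℝ) * diagonal hX.eigenvalues *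
      star (hX.eigenvectorUnitary : Matrix n n ℝ) := by
  simpa [RCLike.ofReal_real_eq_id] using hX.spectral_theorem

open scoped MatrixOrder in
lemma PosSemidef.sqrt_eq_of_sq_eq {A B : Matrix n n ℝ} (hA : A.PosSemidef) (hB : B.PosSemidef)
    (h : B ^ 2 = A) : hA.sqrt = B := by
  have hcfc : hA.sqrt = cfc Real.sqrt A := by
    rw [hA.1.cfc_eq, IsHermitian.cfc, PosSemidef.sqrt, Unitary.conjStarAlgAut_apply]; rfl
  rw [hcfc, ← cfcₙ_eq_cfc, ← CFC.sqrt_eq_real_sqrt A hA.nonneg]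
  exact CFC.sqrt_unique (by rw [← sq, h]) hB.nonneg

lemma IsHermitian.sqrt_transpose_mul_add_smul_one {X : Matrix n n ℝ} (hX : X.IsHermitian) {c : ℝ}
    (hc : 0 ≤ c) (hP : (Xᵀ * X + c • (1 : Matrix n n ℝ)).PosSemidef) :
    hP.sqrt = (hX.eigenvectorUnitary : Matrix n n ℝ) *
      diagonal (fun i => √(hX.eigenvalues i ^ 2 + c)) *
      star (hX.eigenvectorUnitary : Matrix n n ℝ) := by
  set U := (hX.eigenvectorUnitary : Matrix n n ℝ)
  have hUU : star U * U = 1 := mem_unitaryGroup_iff'.mp hX.eigenvectorUnitary.2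
  have hconj : ∀ A B : Matrix n n ℝ, U * A * star U * (U * B * star U) = U * (A * B) * star U := by
    intro A B
    simp only [Matrix.mul_assoc, ← Matrix.mul_assoc (star U) U, hUU, Matrix.one_mul]
  refine PosSemidef.sqrt_eq_of_sq_eq hP ?_ ?_
  · rw [star_eq_conjTranspose]
    exact (posSemidef_diagonal_iff.mpr fun i => Real.sqrt_nonneg _).mul_mul_conjTranspose_same U
  have hdiag : diagonal (fun i => √(hX.eigenvalues i ^ 2 + c)) *
      diagonal (fun i => √(hX.eigenvalues i ^ 2 + c)) =
      diagonal hX.eigenvalues * diagonal hX.eigenvalues + c • 1 := by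
    rw [diagonal_mul_diagonal, diagonal_mul_diagonal, smul_one_eq_diagonal, diagonal_add]
    congr 1
    funext i
    rw [Real.mul_self_sqrt (by positivity)]
    ring
  have hXX : Xᵀ * X = U * (diagonal hX.eigenvalues * diagonal hX.eigenvalues) * star U := by
    rw [← hconj, ← hX.eq_conj_diagonal_eigenvalues, ← conjTranspose_eq_transpose_of_trivial, hX.eq]
  rw [sq, hconj, hdiag, Matrix.mul_add, Matrix.add_mul, hXX, Matrix.mul_smul, Matrix.smul_mul,
    Matrix.mul_one, mem_unitaryGroup_iff.mp hX.eigenvectorUnitary.2]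

end Matrix

lemma abs_eigenvalues_le_lamMax {d : ℕ} {X : Matrix (Fin d) (Fin d) ℝ} (hX : X.IsHermitian)
    (i : Fin d) : |hX.eigenvalues i| ≤ lamMax hX :=
  le_ciSup (f := fun i => |hX.eigenvalues i|) (Set.finite_range _).bddAbove i

lemma frobNorm_le_mul_of_sum_sq_le {d : ℕ} {A B : Matrix (Fin d) (Fin d) ℝ} {α : ℝ}
    (hα : 0 ≤ α) (h : ∑ i, ∑ j, A i j ^ 2 ≤ α ^ 2 * ∑ i, ∑ j, B i j ^ 2) :
    frobNorm A ≤ α * frobNorm B := by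
  rw [frobNorm, frobNorm, ← Real.sqrt_sq hα, ← Real.sqrt_mul (sq_nonneg α)]
  exact Real.sqrt_le_sqrt h

lemma rpow_neg_half_pos_le_one {x : ℝ} (hx : 1 ≤ x) :
    0 < x ^ (-(1 / 2) : ℝ) ∧ x ^ (-(1 / 2) : ℝ) ≤ 1 :=
  ⟨Real.rpow_pos_of_pos (by linarith) _, Real.rpow_le_one_of_one_le_of_nonpos hx (by norm_num)⟩

lemma one_sub_half_mul_rpow_neg_half_eq {κ L M : ℝ} (hκ : 0 < κ) :
    1 - (1 / 2) * (κ * L ^ 2 + 1) ^ (-(1 / 2) : ℝ) * (κ * M ^ 2 + 1) ^ (-(1 / 2) : ℝ) =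
      1 - κ⁻¹ / (2 * (√(L ^ 2 + κ⁻¹) * √(M ^ 2 + κ⁻¹))) := by
  have hrpow : ∀ N : ℝ, (κ * N ^ 2 + 1) ^ (-(1 / 2) : ℝ) = √κ⁻¹ / √(N ^ 2 + κ⁻¹) := by
    intro N
    have hN : κ * N ^ 2 + 1 = (N ^ 2 + κ⁻¹) / κ⁻¹ := by field_simp
    rw [Real.rpow_neg (by positivity), ← Real.sqrt_eq_rpow, hN,
      Real.sqrt_div' _ (by positivity), inv_div]
  have hsq : √κ⁻¹ * √κ⁻¹ = κ⁻¹ := Real.mul_self_sqrt (by positivity)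
  rw [hrpow, hrpow, mul_assoc, div_mul_div_comm, hsq]
  ring

theorem stmt_7_general {d : ℕ} (X Y : Matrix (Fin d) (Fin d) ℝ) (lam : ℝ) (hlam : 0 < lam)
    (hX : X.IsHermitian) (hY : Y.IsHermitian)
    (hPX : (Xᵀ * X + (4 / lam) • (1 : Matrix (Fin d) (Fin d) ℝ)).PosSemidef)
    (hPY : (Yᵀ * Y + (4 / lam) • (1 : Matrix (Fin d) (Fin d) ℝ)).PosSemidef) :
    frobNorm (hPX.sqrt - hPY.sqrt) ≤
      (1 - (1 / 2) * ((lam / 4) * (lamMax hX) ^ 2 + 1) ^ (-(1 / 2) : ℝ) *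
          ((lam / 4) * (lamMax hY) ^ 2 + 1) ^ (-(1 / 2) : ℝ)) * frobNorm (X - Y) ∧
    0 < 1 - (1 / 2) * ((lam / 4) * (lamMax hX) ^ 2 + 1) ^ (-(1 / 2) : ℝ) *
          ((lam / 4) * (lamMax hY) ^ 2 + 1) ^ (-(1 / 2) : ℝ) ∧
    1 - (1 / 2) * ((lam / 4) * (lamMax hX) ^ 2 + 1) ^ (-(1 / 2) : ℝ) *
          ((lam / 4) * (lamMax hY) ^ 2 + 1) ^ (-(1 / 2) : ℝ) < 1 := by
  have hκ : 0 < lam / 4 := by positivity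
  have hweight (L : ℝ) := rpow_neg_half_pos_le_one (x := (lam / 4) * L ^ 2 + 1) (by nlinarith)
  obtain ⟨hsX, hsX'⟩ := hweight (lamMax hX)
  obtain ⟨hsY, hsY'⟩ := hweight (lamMax hY)
  refine ⟨?_, by nlinarith, by nlinarith⟩
  have hα : 0 ≤ 1 - (1 / 2) * ((lam / 4) * (lamMax hX) ^ 2 + 1) ^ (-(1 / 2) : ℝ) *
      ((lam / 4) * (lamMax hY) ^ 2 + 1) ^ (-(1 / 2) : ℝ) := by nlinarith
  have hc : (lam / 4)⁻¹ = 4 / lam := inv_div lam 4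
  rw [one_sub_half_mul_rpow_neg_half_eq hκ, hc] at hα ⊢
  refine frobNorm_le_mul_of_sum_sq_le hα ?_
  have hXY : X - Y = _ := congr_arg₂ (· - ·) hX.eq_conj_diagonal_eigenvalues
    hY.eq_conj_diagonal_eigenvalues
  rw [hX.sqrt_transpose_mul_add_smul_one (by positivity), hY.sqrt_transpose_mul_add_smul_one
    (by positivity), hXY]
  exact Matrix.sum_sq_conj_diagonal_sub_le hX.eigenvectorUnitary.2 hY.eigenvectorUnitary.2
    fun i j => abs_sqrt_sq_add_sub_sqrt_sq_add_le (by positivity)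
      (abs_eigenvalues_le_lamMax hX i) (abs_eigenvalues_le_lamMax hY j)

theorem stmt_7 {d : ℕ} [NeZero d] (X Y : Matrix (Fin d) (Fin d) ℝ) (lam : ℝ) (hlam : 0 < lam)
    (hX : X.IsHermitian) (hY : Y.IsHermitian)
    (hPX : (Xᵀ * X + (4 / lam) • (1 : Matrix (Fin d) (Fin d) ℝ)).PosSemidef)
    (hPY : (Yᵀ * Y + (4 / lam) • (1 : Matrix (Fin d) (Fin d) ℝ)).PosSemidef) :
    frobNorm (hPX.sqrt - hPY.sqrt) ≤
      (1 - (1 / 2) * ((lam / 4) * (lamMax hX) ^ 2 + 1) ^ (-(1 / 2) : ℝ) *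
          ((lam / 4) * (lamMax hY) ^ 2 + 1) ^ (-(1 / 2) : ℝ)) * frobNorm (X - Y) ∧
    0 < 1 - (1 / 2) * ((lam / 4) * (lamMax hX) ^ 2 + 1) ^ (-(1 / 2) : ℝ) *
          ((lam / 4) * (lamMax hY) ^ 2 + 1) ^ (-(1 / 2) : ℝ) ∧
    1 - (1 / 2) * ((lam / 4) * (lamMax hX) ^ 2 + 1) ^ (-(1 / 2) : ℝ) *
          ((lam / 4) * (lamMax hY) ^ 2 + 1) ^ (-(1 / 2) : ℝ) < 1 :=
  stmt_7_general X Y lam hlam hX hY hPX hPY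
end

section
/- Let f: S_{++}^d × S_{++}^d → ℝ be f(Θ, Z) = −log det Θ + tr(Σ̂Θ) + ρ‖Z‖₁ + (λ/2)‖Z − Θ‖_F², and let (Θ̂_λ, Ẑ_λ) be its minimizer. Suppose the alternating minimization updates are Θ_{k+1} = (1/2)(−Y_{k+1} + √(Y_{k+1}² + (4/λ)I)) with Y_{k+1} = (1/λ)Σ̂ − Z_k, and Z_{k+1} = η_{ρ/λ}(Θ_{k+1}). Then ‖Z_{k+1} − Ẑ_λ‖_F ≤ ‖Θ_{k+1} − Θ̂_λ‖_F ≤ C_λ‖Z_k − Ẑ_λ‖_F, where C_λ = 1 − (λΛ_max(Y_{k+1})² + 4)^{-1/2}·(λΛ_max(Y_λ)² + 4)^{-1/2} with Y_λ = (1/λ)Σ̂ − Ẑ_λ, and 0 < C_λ < 1. -/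
open scoped Matrix

/-- Entrywise ℓ₁ norm of a matrix. -/
noncomputable def l1Norm {d : ℕ} (A : Matrix (Fin d) (Fin d) ℝ) : ℝ :=
  ∑ i, ∑ j, |A i j|

/-- Soft-thresholding operator with threshold `τ`. -/
noncomputable def softThresh (τ θ : ℝ) : ℝ := Real.sign θ * max (|θ| - τ) 0

/-- Square root of a positive semidefinite matrix, as `Matrix.PosSemidef.sqrt` was defined
in the older Mathlib: `U * diagonal (√ ∘ eigenvalues) * star U`. -/
noncomputable def psdSqrt {d : ℕ} {A : Matrix (Fin d) (Fin d) ℝ} (hA : A.PosSemidef) :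
    Matrix (Fin d) (Fin d) ℝ :=
  hA.1.eigenvectorUnitary.1 * Matrix.diagonal ((↑) ∘ Real.sqrt ∘ hA.1.eigenvalues) *
    (star hA.1.eigenvectorUnitary : Matrix (Fin d) (Fin d) ℝ)

open scoped MatrixOrder in
lemma psdSqrt_eq_of_sq_eq {d : ℕ} {A B : Matrix (Fin d) (Fin d) ℝ} (hB : B.PosSemidef)
    (hA : A.PosSemidef) (h : B ^ 2 = A) : psdSqrt hA = B := by
  have h1 : psdSqrt hA = CFC.sqrt A := by
    rw [CFC.sqrt_eq_cfc, cfc_nnreal_eq_real _ A hA.nonneg, hA.1.cfc_eq]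
    unfold psdSqrt Matrix.IsHermitian.cfc
    rw [Unitary.conjStarAlgAut_apply]
    congr 2
    funext i
    congr 1
    funext j
    simp [max_eq_left (hA.eigenvalues_nonneg j)]
  rw [h1]
  exact CFC.sqrt_unique (by rw [← pow_two]; exact h) hB.nonneg

lemma softThresh_eq (τ x : ℝ) (hτ : 0 ≤ τ) :
    softThresh τ x = max (x - τ) 0 - max (-x - τ) 0 := by
  unfold softThresh
  rcases lt_trichotomy x 0 with h | h | h
  · rw [Real.sign_of_neg h, abs_of_neg h, max_eq_right (by linarith : x - τ ≤ 0)]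
    ring
  · subst h; simp
  · rw [Real.sign_of_pos h, abs_of_pos h, max_eq_right (by linarith : -x - τ ≤ 0)]
    ring

lemma softThresh_sub_le (τ a b : ℝ) (hτ : 0 ≤ τ) :
    softThresh τ a - softThresh τ b ≤ |a - b| := by
  have h1 : a - b ≤ |a - b| := le_abs_self _
  have h2 : -(a - b) ≤ |a - b| := neg_le_abs _
  rw [softThresh_eq τ a hτ, softThresh_eq τ b hτ]
  simp only [max_def]
  split_ifs <;> linarith

lemma softThresh_lip (τ a b : ℝ) (hτ : 0 ≤ τ) :
    |softThresh τ a - softThresh τ b| ≤ |a - b| := by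
  rw [abs_le]
  constructor
  · have := softThresh_sub_le τ b a hτ
    rw [abs_sub_comm] at this; linarith
  · exact softThresh_sub_le τ a b hτ

lemma frobNorm_nonneg {d : ℕ} (A : Matrix (Fin d) (Fin d) ℝ) : 0 ≤ frobNorm A :=
  Real.sqrt_nonneg _

lemma frobNorm_le_of_forall {d : ℕ} {A B : Matrix (Fin d) (Fin d) ℝ} {k : ℝ} (hk : 0 ≤ k)
    (h : ∀ i j, |A i j| ≤ k * |B i j|) : frobNorm A ≤ k * frobNorm B := by
  unfold frobNorm
  rw [← Real.sqrt_sq hk, ← Real.sqrt_mul (by positivity)]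
  apply Real.sqrt_le_sqrt
  rw [Finset.mul_sum]
  refine Finset.sum_le_sum fun i _ => ?_
  rw [Finset.mul_sum]
  refine Finset.sum_le_sum fun j _ => ?_
  calc A i j ^ 2 = |A i j| ^ 2 := (sq_abs _).symm
    _ ≤ (k * |B i j|) ^ 2 := by
        apply pow_le_pow_left₀ (abs_nonneg _) (h i j)
    _ = k ^ 2 * B i j ^ 2 := by rw [mul_pow, sq_abs]

lemma frobNorm_neg {d : ℕ} (A : Matrix (Fin d) (Fin d) ℝ) : frobNorm (-A) = frobNorm A := by
  unfold frobNorm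
  congr 1
  refine Finset.sum_congr rfl fun i _ => Finset.sum_congr rfl fun j _ => ?_
  simp

lemma frobNorm_smul {d : ℕ} (r : ℝ) (A : Matrix (Fin d) (Fin d) ℝ) :
    frobNorm (r • A) = |r| * frobNorm A := by
  unfold frobNorm
  rw [← Real.sqrt_sq_eq_abs, ← Real.sqrt_mul (sq_nonneg r)]
  congr 1
  rw [Finset.mul_sum]
  refine Finset.sum_congr rfl fun i _ => ?_
  rw [Finset.mul_sum]
  refine Finset.sum_congr rfl fun j _ => ?_
  simp [mul_pow]

lemma frobNorm_eq_norm {d : ℕ} (A : Matrix (Fin d) (Fin d) ℝ) :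
    frobNorm A = ‖(WithLp.equiv 2 ((Fin d × Fin d) → ℝ)).symm (fun p => A p.1 p.2)‖ := by
  rw [EuclideanSpace.norm_eq]
  unfold frobNorm
  congr 1
  rw [Fintype.sum_prod_type]
  refine Finset.sum_congr rfl fun i _ => Finset.sum_congr rfl fun j _ => ?_
  rw [Real.norm_eq_abs, sq_abs]
  rfl

lemma frobNorm_add_le {d : ℕ} (A B : Matrix (Fin d) (Fin d) ℝ) :
    frobNorm (A + B) ≤ frobNorm A + frobNorm B := by
  rw [frobNorm_eq_norm, frobNorm_eq_norm, frobNorm_eq_norm]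
  have : (WithLp.equiv 2 ((Fin d × Fin d) → ℝ)).symm (fun p => (A + B) p.1 p.2) =
      (WithLp.equiv 2 ((Fin d × Fin d) → ℝ)).symm (fun p => A p.1 p.2) +
      (WithLp.equiv 2 ((Fin d × Fin d) → ℝ)).symm (fun p => B p.1 p.2) := rfl
  rw [this]
  exact norm_add_le _ _

-- one-sided scalar contraction
lemma scalar_one_side (c M1 M2 μ ν : ℝ) (hc : 0 < c) (h1 : |μ| ≤ M1) (h2 : |ν| ≤ M2) :
    μ + ν ≤ (1 - 2 * ((c / 4) / (Real.sqrt (M1 ^ 2 + c) * Real.sqrt (M2 ^ 2 + c)))) *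
      (Real.sqrt (μ ^ 2 + c) + Real.sqrt (ν ^ 2 + c)) := by
  set p := Real.sqrt (μ ^ 2 + c) with hp
  set q := Real.sqrt (ν ^ 2 + c) with hq
  set sA := Real.sqrt (M1 ^ 2 + c) with hsA
  set sB := Real.sqrt (M2 ^ 2 + c) with hsB
  have hμ2 : μ ^ 2 ≤ M1 ^ 2 := by
    rw [← sq_abs μ]; exact pow_le_pow_left₀ (abs_nonneg _) h1 2
  have hν2 : ν ^ 2 ≤ M2 ^ 2 := by
    rw [← sq_abs ν]; exact pow_le_pow_left₀ (abs_nonneg _) h2 2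
  have hp2 : p ^ 2 = μ ^ 2 + c := Real.sq_sqrt (by positivity)
  have hq2 : q ^ 2 = ν ^ 2 + c := Real.sq_sqrt (by positivity)
  have hsA2 : sA ^ 2 = M1 ^ 2 + c := Real.sq_sqrt (by positivity)
  have hsB2 : sB ^ 2 = M2 ^ 2 + c := Real.sq_sqrt (by positivity)
  have hppos : 0 < p := Real.sqrt_pos.mpr (by positivity)
  have hqpos : 0 < q := Real.sqrt_pos.mpr (by positivity)
  have hsApos : 0 < sA := Real.sqrt_pos.mpr (by positivity)
  have hsBpos : 0 < sB := Real.sqrt_pos.mpr (by positivity)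
  have hpsA : p ≤ sA := Real.sqrt_le_sqrt (by linarith)
  have hqsB : q ≤ sB := Real.sqrt_le_sqrt (by linarith)
  have hμp : |μ| < p := by
    rw [hp, ← Real.sqrt_sq_eq_abs]
    exact Real.sqrt_lt_sqrt (sq_nonneg _) (by linarith)
  have hνq : |ν| < q := by
    rw [hq, ← Real.sqrt_sq_eq_abs]
    exact Real.sqrt_lt_sqrt (sq_nonneg _) (by linarith)
  have hμp1 : μ < p := lt_of_le_of_lt (le_abs_self _) hμp
  have hμp2 : -μ < p := lt_of_le_of_lt (neg_le_abs _) hμp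
  have hνq1 : ν < q := lt_of_le_of_lt (le_abs_self _) hνq
  have hνq2 : -ν < q := lt_of_le_of_lt (neg_le_abs _) hνq
  have key : (c / 2) / (sA * sB) * (p + q) ≤ (p + q) - (μ + ν) := by
    rw [div_mul_eq_mul_div, div_le_iff₀ (by positivity)]
    have e1 : (p - μ) * (p + μ) = c := by
      rw [show (p - μ) * (p + μ) = p ^ 2 - μ ^ 2 from by ring, hp2]; ring
    have e2 : (q - ν) * (q + ν) = c := by
      rw [show (q - ν) * (q + ν) = q ^ 2 - ν ^ 2 from by ring, hq2]; ring
    have f1 : c / 2 ≤ (p - μ) * sA := by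
      have h' : p + μ ≤ 2 * sA := by linarith
      have := mul_le_mul_of_nonneg_left h' (by linarith : (0:ℝ) ≤ p - μ)
      rw [e1] at this; linarith
    have f2 : c / 2 ≤ (q - ν) * sB := by
      have h' : q + ν ≤ 2 * sB := by linarith
      have := mul_le_mul_of_nonneg_left h' (by linarith : (0:ℝ) ≤ q - ν)
      rw [e2] at this; linarith
    have g1 : (c / 2) * q ≤ (p - μ) * (sA * sB) := by
      have i1 : (c / 2) * q ≤ (c / 2) * sB :=
        mul_le_mul_of_nonneg_left hqsB (by positivity)
      have i2 : (c / 2) * sB ≤ ((p - μ) * sA) * sB :=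
        mul_le_mul_of_nonneg_right f1 hsBpos.le
      have i3 : ((p - μ) * sA) * sB = (p - μ) * (sA * sB) := by ring
      linarith
    have g2 : (c / 2) * p ≤ (q - ν) * (sA * sB) := by
      have i1 : (c / 2) * p ≤ (c / 2) * sA :=
        mul_le_mul_of_nonneg_left hpsA (by positivity)
      have i2 : (c / 2) * sA ≤ ((q - ν) * sB) * sA :=
        mul_le_mul_of_nonneg_right f2 hsApos.le
      have i3 : ((q - ν) * sB) * sA = (q - ν) * (sA * sB) := by ring
      linarith
    have expand : (p + q - (μ + ν)) * (sA * sB) =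
        (p - μ) * (sA * sB) + (q - ν) * (sA * sB) := by ring
    linarith
  have e4 : 2 * ((c / 4) / (sA * sB)) = (c / 2) / (sA * sB) := by ring
  rw [e4]
  have expand2 : (1 - (c / 2) / (sA * sB)) * (p + q) =
      (p + q) - (c / 2) / (sA * sB) * (p + q) := by ring
  linarith

lemma frob_sq_eq_trace {d : ℕ} (A : Matrix (Fin d) (Fin d) ℝ) :
    ∑ i, ∑ j, A i j ^ 2 = (Aᴴ * A).trace := by
  unfold Matrix.trace
  rw [Finset.sum_comm]
  refine Finset.sum_congr rfl fun j _ => ?_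
  simp [Matrix.diag, Matrix.mul_apply, Matrix.conjTranspose_apply, pow_two]

lemma frobNorm_conj {d : ℕ} (U V M : Matrix (Fin d) (Fin d) ℝ)
    (hU : U * Uᴴ = 1) (hV : V * Vᴴ = 1) :
    frobNorm (Uᴴ * M * V) = frobNorm M := by
  unfold frobNorm
  rw [frob_sq_eq_trace, frob_sq_eq_trace]
  have e1 : (Uᴴ * M * V)ᴴ * (Uᴴ * M * V) = Vᴴ * (Mᴴ * M) * V := by
    rw [Matrix.conjTranspose_mul, Matrix.conjTranspose_mul, Matrix.conjTranspose_conjTranspose]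
    calc Vᴴ * (Mᴴ * U) * (Uᴴ * M * V) = Vᴴ * (Mᴴ * (U * Uᴴ) * M) * V := by
          simp only [Matrix.mul_assoc]
      _ = Vᴴ * (Mᴴ * M) * V := by rw [hU, Matrix.mul_one]
  rw [e1, Matrix.trace_mul_cycle, ← Matrix.mul_assoc, hV, Matrix.one_mul]

lemma scalar_abs (c M1 M2 μ ν : ℝ) (hc : 0 < c) (h1 : |μ| ≤ M1) (h2 : |ν| ≤ M2) :
    |μ + ν| ≤ (1 - 2 * ((c / 4) / (Real.sqrt (M1 ^ 2 + c) * Real.sqrt (M2 ^ 2 + c)))) *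
      (Real.sqrt (μ ^ 2 + c) + Real.sqrt (ν ^ 2 + c)) := by
  rw [abs_le]
  constructor
  · have := scalar_one_side c M1 M2 (-μ) (-ν) hc (by rwa [abs_neg]) (by rwa [abs_neg])
    rw [neg_sq, neg_sq] at this
    linarith
  · exact scalar_one_side c M1 M2 μ ν hc h1 h2

set_option maxHeartbeats 2000000 in
lemma sqrt_contraction {d : ℕ} {X Y : Matrix (Fin d) (Fin d) ℝ}
    (hX : X.IsHermitian) (hY : Y.IsHermitian) {c M1 M2 : ℝ} (hc : 0 < c)
    (hM1 : ∀ i, |hX.eigenvalues i| ≤ M1) (hM2 : ∀ i, |hY.eigenvalues i| ≤ M2)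
    (hPX : (X * X + c • (1 : Matrix (Fin d) (Fin d) ℝ)).PosSemidef)
    (hPY : (Y * Y + c • (1 : Matrix (Fin d) (Fin d) ℝ)).PosSemidef) :
    frobNorm (psdSqrt hPX - psdSqrt hPY) ≤
      (1 - 2 * ((c / 4) / (Real.sqrt (M1 ^ 2 + c) * Real.sqrt (M2 ^ 2 + c)))) *
        frobNorm (X - Y) := by
  set k : ℝ := 1 - 2 * ((c / 4) / (Real.sqrt (M1 ^ 2 + c) * Real.sqrt (M2 ^ 2 + c))) with hk
  -- nonnegativity of k
  have hsApos : 0 < Real.sqrt (M1 ^ 2 + c) := Real.sqrt_pos.mpr (by positivity)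
  have hsBpos : 0 < Real.sqrt (M2 ^ 2 + c) := Real.sqrt_pos.mpr (by positivity)
  have hsAc : Real.sqrt c ≤ Real.sqrt (M1 ^ 2 + c) := Real.sqrt_le_sqrt (by nlinarith [sq_nonneg M1])
  have hsBc : Real.sqrt c ≤ Real.sqrt (M2 ^ 2 + c) := Real.sqrt_le_sqrt (by nlinarith [sq_nonneg M2])
  have hcc : Real.sqrt c * Real.sqrt c = c := Real.mul_self_sqrt hc.le
  have hk0 : 0 ≤ k := by
    have h1 : c ≤ Real.sqrt (M1 ^ 2 + c) * Real.sqrt (M2 ^ 2 + c) := by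
      calc c = Real.sqrt c * Real.sqrt c := hcc.symm
        _ ≤ Real.sqrt (M1 ^ 2 + c) * Real.sqrt (M2 ^ 2 + c) :=
            mul_le_mul hsAc hsBc (Real.sqrt_nonneg _) hsApos.le
    have h2 : (c / 4) / (Real.sqrt (M1 ^ 2 + c) * Real.sqrt (M2 ^ 2 + c)) ≤ 1 / 4 := by
      rw [div_le_iff₀ (by positivity)]
      linarith
    rw [hk]; linarith
  -- spectral data
  set U : Matrix (Fin d) (Fin d) ℝ := (hX.eigenvectorUnitary : Matrix (Fin d) (Fin d) ℝ) with hUdef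
  set V : Matrix (Fin d) (Fin d) ℝ := (hY.eigenvectorUnitary : Matrix (Fin d) (Fin d) ℝ) with hVdef
  set μ : Fin d → ℝ := hX.eigenvalues with hμdef
  set ν : Fin d → ℝ := hY.eigenvalues with hνdef
  have hU2 : U * Uᴴ = 1 := by
    rw [← Matrix.star_eq_conjTranspose]
    exact (Matrix.mem_unitaryGroup_iff).mp hX.eigenvectorUnitary.2
  have hU1 : Uᴴ * U = 1 := by
    rw [← Matrix.star_eq_conjTranspose]
    exact (Matrix.mem_unitaryGroup_iff').mp hX.eigenvectorUnitary.2
  have hV2 : V * Vᴴ = 1 := by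
    rw [← Matrix.star_eq_conjTranspose]
    exact (Matrix.mem_unitaryGroup_iff).mp hY.eigenvectorUnitary.2
  have hV1 : Vᴴ * V = 1 := by
    rw [← Matrix.star_eq_conjTranspose]
    exact (Matrix.mem_unitaryGroup_iff').mp hY.eigenvectorUnitary.2
  have hXs : X = U * Matrix.diagonal μ * Uᴴ := by
    have := hX.spectral_theorem
    rwa [Unitary.conjStarAlgAut_apply, Matrix.star_eq_conjTranspose, RCLike.ofReal_real_eq_id, Function.id_comp] at this
  have hYs : Y = V * Matrix.diagonal ν * Vᴴ := by
    have := hY.spectral_theorem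
    rwa [Unitary.conjStarAlgAut_apply, Matrix.star_eq_conjTranspose, RCLike.ofReal_real_eq_id, Function.id_comp] at this
  set a : Fin d → ℝ := fun i => Real.sqrt (μ i ^ 2 + c) with hadef
  set b : Fin d → ℝ := fun i => Real.sqrt (ν i ^ 2 + c) with hbdef
  set SX : Matrix (Fin d) (Fin d) ℝ := U * Matrix.diagonal a * Uᴴ with hSXdef
  set SY : Matrix (Fin d) (Fin d) ℝ := V * Matrix.diagonal b * Vᴴ with hSYdef
  have hconjU : ∀ D E : Matrix (Fin d) (Fin d) ℝ,
      (U * D * Uᴴ) * (U * E * Uᴴ) = U * (D * E) * Uᴴ := by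
    intro D E
    calc (U * D * Uᴴ) * (U * E * Uᴴ) = U * (D * ((Uᴴ * U) * (E * Uᴴ))) := by
          simp only [Matrix.mul_assoc]
      _ = U * (D * E) * Uᴴ := by rw [hU1, Matrix.one_mul, Matrix.mul_assoc, Matrix.mul_assoc]
  have hconjV : ∀ D E : Matrix (Fin d) (Fin d) ℝ,
      (V * D * Vᴴ) * (V * E * Vᴴ) = V * (D * E) * Vᴴ := by
    intro D E
    calc (V * D * Vᴴ) * (V * E * Vᴴ) = V * (D * ((Vᴴ * V) * (E * Vᴴ))) := by
          simp only [Matrix.mul_assoc]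
      _ = V * (D * E) * Vᴴ := by rw [hV1, Matrix.one_mul, Matrix.mul_assoc, Matrix.mul_assoc]
  have hsmul1 : (c • (1 : Matrix (Fin d) (Fin d) ℝ)) = Matrix.diagonal (fun _ => c) := by
    ext i j
    by_cases h : i = j <;> simp [Matrix.one_apply, Matrix.diagonal_apply, h]
  have hSXsq : SX ^ 2 = X * X + c • (1 : Matrix (Fin d) (Fin d) ℝ) := by
    rw [pow_two, hSXdef, hconjU, Matrix.diagonal_mul_diagonal]
    have ha2 : (fun i => a i * a i) = fun i => μ i * μ i + c := by
      funext i
      show Real.sqrt (μ i ^ 2 + c) * Real.sqrt (μ i ^ 2 + c) = μ i * μ i + c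
      rw [Real.mul_self_sqrt (by positivity), pow_two]
    rw [ha2]
    have : (Matrix.diagonal fun i => μ i * μ i + c) =
        Matrix.diagonal (fun i => μ i * μ i) + Matrix.diagonal (fun _ => c) := by
      rw [Matrix.diagonal_add]
    rw [this, Matrix.mul_add, Matrix.add_mul]
    congr 1
    · rw [← Matrix.diagonal_mul_diagonal, ← hconjU, ← hXs]
    · rw [← hsmul1, Matrix.mul_smul, Matrix.smul_mul, Matrix.mul_one, hU2]
  have hSYsq : SY ^ 2 = Y * Y + c • (1 : Matrix (Fin d) (Fin d) ℝ) := by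
    rw [pow_two, hSYdef, hconjV, Matrix.diagonal_mul_diagonal]
    have hb2 : (fun i => b i * b i) = fun i => ν i * ν i + c := by
      funext i
      show Real.sqrt (ν i ^ 2 + c) * Real.sqrt (ν i ^ 2 + c) = ν i * ν i + c
      rw [Real.mul_self_sqrt (by positivity), pow_two]
    rw [hb2]
    have : (Matrix.diagonal fun i => ν i * ν i + c) =
        Matrix.diagonal (fun i => ν i * ν i) + Matrix.diagonal (fun _ => c) := by
      rw [Matrix.diagonal_add]
    rw [this, Matrix.mul_add, Matrix.add_mul]
    congr 1
    · rw [← Matrix.diagonal_mul_diagonal, ← hconjV, ← hYs]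
    · rw [← hsmul1, Matrix.mul_smul, Matrix.smul_mul, Matrix.mul_one, hV2]
  have hSXpsd : SX.PosSemidef := by
    rw [hSXdef, ← Matrix.star_eq_conjTranspose]
    exact Matrix.PosSemidef.mul_mul_conjTranspose_same
      (Matrix.posSemidef_diagonal_iff.mpr fun i => Real.sqrt_nonneg _) U
  have hSYpsd : SY.PosSemidef := by
    rw [hSYdef, ← Matrix.star_eq_conjTranspose]
    exact Matrix.PosSemidef.mul_mul_conjTranspose_same
      (Matrix.posSemidef_diagonal_iff.mpr fun i => Real.sqrt_nonneg _) V
  have hSX : psdSqrt hPX = SX := psdSqrt_eq_of_sq_eq hSXpsd hPX hSXsq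
  have hSY : psdSqrt hPY = SY := psdSqrt_eq_of_sq_eq hSYpsd hPY hSYsq
  -- transfer identities
  have hUX : Uᴴ * X = Matrix.diagonal μ * Uᴴ := by
    rw [hXs, ← Matrix.mul_assoc, ← Matrix.mul_assoc, hU1, Matrix.one_mul]
  have hUSX : Uᴴ * SX = Matrix.diagonal a * Uᴴ := by
    rw [hSXdef, ← Matrix.mul_assoc, ← Matrix.mul_assoc, hU1, Matrix.one_mul]
  have hYV : Y * V = V * Matrix.diagonal ν := by
    rw [hYs, Matrix.mul_assoc, hV1, Matrix.mul_one]
  have hSYV : SY * V = V * Matrix.diagonal b := by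
    rw [hSYdef, Matrix.mul_assoc, hV1, Matrix.mul_one]
  set W : Matrix (Fin d) (Fin d) ℝ := Uᴴ * (SX - SY) * V with hWdef
  set F : Matrix (Fin d) (Fin d) ℝ := Uᴴ * (X - Y) * V with hFdef
  have key : Matrix.diagonal a * W + W * Matrix.diagonal b =
      Matrix.diagonal μ * F + F * Matrix.diagonal ν := by
    have l1 : Matrix.diagonal a * W = Uᴴ * (SX * (SX - SY)) * V := by
      rw [hWdef, ← Matrix.mul_assoc, ← Matrix.mul_assoc, ← hUSX, Matrix.mul_assoc Uᴴ SX _]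
    have l2 : W * Matrix.diagonal b = Uᴴ * ((SX - SY) * SY) * V := by
      rw [hWdef]; simp only [Matrix.mul_assoc]; rw [← hSYV]
    have l3 : Matrix.diagonal μ * F = Uᴴ * (X * (X - Y)) * V := by
      rw [hFdef, ← Matrix.mul_assoc, ← Matrix.mul_assoc, ← hUX, Matrix.mul_assoc Uᴴ X _]
    have l4 : F * Matrix.diagonal ν = Uᴴ * ((X - Y) * Y) * V := by
      rw [hFdef]; simp only [Matrix.mul_assoc]; rw [← hYV]
    rw [l1, l2, l3, l4, ← Matrix.add_mul, ← Matrix.mul_add, ← Matrix.add_mul, ← Matrix.mul_add]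
    have m1 : SX * (SX - SY) + (SX - SY) * SY = SX * SX - SY * SY := by noncomm_ring
    have m2 : X * (X - Y) + (X - Y) * Y = X * X - Y * Y := by noncomm_ring
    have m3 : SX * SX - SY * SY = X * X - Y * Y := by
      have e1 : SX * SX = X * X + c • (1 : Matrix (Fin d) (Fin d) ℝ) := by
        rw [← pow_two]; exact hSXsq
      have e2 : SY * SY = Y * Y + c • (1 : Matrix (Fin d) (Fin d) ℝ) := by
        rw [← pow_two]; exact hSYsq
      rw [e1, e2]; abel
    rw [m1, m2, m3]
  have entry : ∀ i j, (a i + b j) * W i j = (μ i + ν j) * F i j := by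
    intro i j
    have h := congrFun (congrFun key i) j
    simp only [Matrix.add_apply, Matrix.diagonal_mul, Matrix.mul_diagonal] at h
    ring_nf
    ring_nf at h
    linarith
  have entrybound : ∀ i j, |W i j| ≤ k * |F i j| := by
    intro i j
    have hai : 0 < a i := Real.sqrt_pos.mpr (by positivity)
    have hbj : 0 < b j := Real.sqrt_pos.mpr (by positivity)
    have habs := scalar_abs c M1 M2 (μ i) (ν j) hc (hM1 i) (hM2 j)
    have h1 : (a i + b j) * |W i j| = |μ i + ν j| * |F i j| := by
      rw [← abs_of_pos (by linarith : (0:ℝ) < a i + b j), ← abs_mul, entry i j, abs_mul]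
    have h2 : |μ i + ν j| * |F i j| ≤ (k * (a i + b j)) * |F i j| := by
      apply mul_le_mul_of_nonneg_right _ (abs_nonneg _)
      exact habs
    have h3 : (a i + b j) * |W i j| ≤ (a i + b j) * (k * |F i j|) := by
      calc (a i + b j) * |W i j| = |μ i + ν j| * |F i j| := h1
        _ ≤ (k * (a i + b j)) * |F i j| := h2
        _ = (a i + b j) * (k * |F i j|) := by ring
    exact le_of_mul_le_mul_left h3 (by linarith)
  have hW : frobNorm W ≤ k * frobNorm F := frobNorm_le_of_forall hk0 entrybound
  have hWn : frobNorm W = frobNorm (psdSqrt hPX - psdSqrt hPY) := by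
    rw [hSX, hSY, hWdef]
    exact frobNorm_conj U V _ hU2 hV2
  have hFn : frobNorm F = frobNorm (X - Y) := by
    rw [hFdef]
    exact frobNorm_conj U V _ hU2 hV2
  rw [← hWn, ← hFn]
  exact hW


set_option maxHeartbeats 2000000 in
theorem stmt_14 {d : ℕ} [NeZero d] (S : Matrix (Fin d) (Fin d) ℝ) (ρ lam : ℝ)
    (hρ : 0 ≤ ρ) (hlam : 0 < lam) (hS : S.IsHermitian)
    (f : Matrix (Fin d) (Fin d) ℝ → Matrix (Fin d) (Fin d) ℝ → ℝ)
    (hf : ∀ Θ Z, f Θ Z = -Real.log Θ.det + (S * Θ).trace + ρ * l1Norm Z +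
        lam / 2 * (frobNorm (Z - Θ)) ^ 2)
    -- the minimizer (Θ̂_λ, Ẑ_λ) of `f` over S⁺⁺ × S⁺⁺ :
    (Θhat Zhat : Matrix (Fin d) (Fin d) ℝ)
    (hmin : ∀ Θ Z : Matrix (Fin d) (Fin d) ℝ, Θ.PosDef → Z.PosDef → f Θhat Zhat ≤ f Θ Z)
    -- fixed-point equations satisfied by the minimizer:
    (Ylam : Matrix (Fin d) (Fin d) ℝ) (hYlam : Ylam = (1 / lam) • S - Zhat)
    (hYlamH : Ylam.IsHermitian)
    (hPl : (Ylam * Ylam + (4 / lam) • (1 : Matrix (Fin d) (Fin d) ℝ)).PosSemidef)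
    (hfixT : Θhat = (1 / 2 : ℝ) • (-Ylam + psdSqrt hPl))
    (hfixZ : Zhat = Matrix.of fun i j => softThresh (ρ / lam) (Θhat i j))
    -- the alternating-minimization updates:
    (Zk Yk1 Θk1 Zk1 : Matrix (Fin d) (Fin d) ℝ)
    (hYk1 : Yk1 = (1 / lam) • S - Zk) (hYk1H : Yk1.IsHermitian)
    (hPk : (Yk1 * Yk1 + (4 / lam) • (1 : Matrix (Fin d) (Fin d) ℝ)).PosSemidef)
    (hTk1 : Θk1 = (1 / 2 : ℝ) • (-Yk1 + psdSqrt hPk))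
    (hZk1 : Zk1 = Matrix.of fun i j => softThresh (ρ / lam) (Θk1 i j)) :
    frobNorm (Zk1 - Zhat) ≤ frobNorm (Θk1 - Θhat) ∧
    frobNorm (Θk1 - Θhat) ≤
      (1 - (lam * (lamMax hYk1H) ^ 2 + 4) ^ (-(1 / 2) : ℝ) *
          (lam * (lamMax hYlamH) ^ 2 + 4) ^ (-(1 / 2) : ℝ)) * frobNorm (Zk - Zhat) ∧
    0 < 1 - (lam * (lamMax hYk1H) ^ 2 + 4) ^ (-(1 / 2) : ℝ) *
          (lam * (lamMax hYlamH) ^ 2 + 4) ^ (-(1 / 2) : ℝ) ∧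
    1 - (lam * (lamMax hYk1H) ^ 2 + 4) ^ (-(1 / 2) : ℝ) *
          (lam * (lamMax hYlamH) ^ 2 + 4) ^ (-(1 / 2) : ℝ) < 1 := by
  have hτ : 0 ≤ ρ / lam := div_nonneg hρ hlam.le
  set M1 : ℝ := lamMax hYk1H with hM1def
  set M2 : ℝ := lamMax hYlamH with hM2def
  have hM1 : ∀ i, |hYk1H.eigenvalues i| ≤ M1 := fun i => by
    rw [hM1def]
    show |hYk1H.eigenvalues i| ≤ ⨆ j, |hYk1H.eigenvalues j|
    exact le_ciSup (Set.Finite.bddAbove (Set.finite_range fun j => |hYk1H.eigenvalues j|)) i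
  have hM2 : ∀ i, |hYlamH.eigenvalues i| ≤ M2 := fun i => by
    rw [hM2def]
    show |hYlamH.eigenvalues i| ≤ ⨆ j, |hYlamH.eigenvalues j|
    exact le_ciSup (Set.Finite.bddAbove (Set.finite_range fun j => |hYlamH.eigenvalues j|)) i
  have hc : 0 < (4:ℝ) / lam := by positivity
  set T : ℝ := (lam * M1 ^ 2 + 4) ^ (-(1 / 2) : ℝ) * (lam * M2 ^ 2 + 4) ^ (-(1 / 2) : ℝ)
    with hTdef
  have hb1 : (0:ℝ) < lam * M1 ^ 2 + 4 := by positivity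
  have hb2 : (0:ℝ) < lam * M2 ^ 2 + 4 := by positivity
  have hr1 : (lam * M1 ^ 2 + 4) ^ (-(1 / 2) : ℝ) = (Real.sqrt (lam * M1 ^ 2 + 4))⁻¹ := by
    rw [Real.rpow_neg hb1.le, ← Real.sqrt_eq_rpow]
  have hr2 : (lam * M2 ^ 2 + 4) ^ (-(1 / 2) : ℝ) = (Real.sqrt (lam * M2 ^ 2 + 4))⁻¹ := by
    rw [Real.rpow_neg hb2.le, ← Real.sqrt_eq_rpow]
  have hsl : Real.sqrt lam * Real.sqrt lam = lam := Real.mul_self_sqrt hlam.le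
  have hslpos : 0 < Real.sqrt lam := Real.sqrt_pos.mpr hlam
  have hsApos : 0 < Real.sqrt (M1 ^ 2 + 4 / lam) := Real.sqrt_pos.mpr (by positivity)
  have hsBpos : 0 < Real.sqrt (M2 ^ 2 + 4 / lam) := Real.sqrt_pos.mpr (by positivity)
  have hs1 : Real.sqrt (lam * M1 ^ 2 + 4) = Real.sqrt lam * Real.sqrt (M1 ^ 2 + 4 / lam) := by
    rw [← Real.sqrt_mul hlam.le]
    congr 1
    field_simp
  have hs2 : Real.sqrt (lam * M2 ^ 2 + 4) = Real.sqrt lam * Real.sqrt (M2 ^ 2 + 4 / lam) := by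
    rw [← Real.sqrt_mul hlam.le]
    congr 1
    field_simp
  have hTt : (4 / lam / 4) / (Real.sqrt (M1 ^ 2 + 4 / lam) * Real.sqrt (M2 ^ 2 + 4 / lam)) = T := by
    rw [hTdef, hr1, hr2, hs1, hs2]
    have h4 : (4:ℝ) / lam / 4 = 1 / lam := by
      field_simp
    rw [h4]
    rw [mul_inv, mul_inv]
    field_simp
    exact Real.sq_sqrt hlam.le
  -- bounds on T
  have hT0 : 0 < T := by
    rw [hTdef, hr1, hr2]
    positivity
  have h2le1 : (2:ℝ) ≤ Real.sqrt (lam * M1 ^ 2 + 4) := by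
    rw [show (2:ℝ) = Real.sqrt 4 by
      rw [show (4:ℝ) = 2 ^ 2 by norm_num, Real.sqrt_sq (by norm_num : (0:ℝ) ≤ 2)]]
    exact Real.sqrt_le_sqrt (by nlinarith [sq_nonneg M1])
  have h2le2 : (2:ℝ) ≤ Real.sqrt (lam * M2 ^ 2 + 4) := by
    rw [show (2:ℝ) = Real.sqrt 4 by
      rw [show (4:ℝ) = 2 ^ 2 by norm_num, Real.sqrt_sq (by norm_num : (0:ℝ) ≤ 2)]]
    exact Real.sqrt_le_sqrt (by nlinarith [sq_nonneg M2])
  have hinv1 : (Real.sqrt (lam * M1 ^ 2 + 4))⁻¹ ≤ 1 / 2 := by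
    rw [show (1:ℝ)/2 = (2:ℝ)⁻¹ by norm_num]
    exact inv_anti₀ (by norm_num) h2le1
  have hinv2 : (Real.sqrt (lam * M2 ^ 2 + 4))⁻¹ ≤ 1 / 2 := by
    rw [show (1:ℝ)/2 = (2:ℝ)⁻¹ by norm_num]
    exact inv_anti₀ (by norm_num) h2le2
  have hT14 : T ≤ 1 / 4 := by
    rw [hTdef, hr1, hr2]
    calc (Real.sqrt (lam * M1 ^ 2 + 4))⁻¹ * (Real.sqrt (lam * M2 ^ 2 + 4))⁻¹
        ≤ (1/2) * (1/2) := by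
          apply mul_le_mul hinv1 hinv2 (by positivity) (by norm_num)
      _ = 1 / 4 := by norm_num
  -- Part 1 : soft-thresholding is 1-Lipschitz entrywise
  have h1 : frobNorm (Zk1 - Zhat) ≤ frobNorm (Θk1 - Θhat) := by
    have hb : ∀ i j, |(Zk1 - Zhat) i j| ≤ 1 * |(Θk1 - Θhat) i j| := by
      intro i j
      rw [one_mul, Matrix.sub_apply, Matrix.sub_apply, hZk1, hfixZ]
      simp only [Matrix.of_apply]
      exact softThresh_lip _ _ _ hτ
    have := frobNorm_le_of_forall (by norm_num : (0:ℝ) ≤ 1) hb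
    rwa [one_mul] at this
  -- Part 2 : contraction
  have hcontr := sqrt_contraction hYk1H hYlamH hc hM1 hM2 hPk hPl
  have hYdiff : Yk1 - Ylam = -(Zk - Zhat) := by
    rw [hYk1, hYlam]
    abel
  rw [hYdiff, frobNorm_neg, hTt] at hcontr
  have hTheta : Θk1 - Θhat = (1/2 : ℝ) • ((Zk - Zhat) + (psdSqrt hPk - psdSqrt hPl)) := by
    rw [hTk1, hfixT, ← smul_sub]
    congr 1
    have hd : Ylam - Yk1 = Zk - Zhat := by
      rw [hYk1, hYlam]
      abel
    calc -Yk1 + psdSqrt hPk - (-Ylam + psdSqrt hPl)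
        = (Ylam - Yk1) + (psdSqrt hPk - psdSqrt hPl) := by abel
      _ = (Zk - Zhat) + (psdSqrt hPk - psdSqrt hPl) := by rw [hd]
  have h2 : frobNorm (Θk1 - Θhat) ≤ (1 - T) * frobNorm (Zk - Zhat) := by
    rw [hTheta, frobNorm_smul, abs_of_pos (by norm_num : (0:ℝ) < 1/2)]
    have htri := frobNorm_add_le (Zk - Zhat) (psdSqrt hPk - psdSqrt hPl)
    have hz := frobNorm_nonneg (Zk - Zhat)
    nlinarith [hcontr, htri, hz]
  exact ⟨h1, h2, by linarith, by linarith⟩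
end

section
/- Let G(Θ) = −log det Θ + tr(Σ̂Θ) + ρ‖Θ‖₁ with minimizer Θ̂_G over S_{++}^d, and let (Θ̂_λ, Ẑ_λ) minimize f(Θ, Z) = −log det Θ + tr(Σ̂Θ) + ρ‖Z‖₁ + (λ/2)‖Z − Θ‖_F². Then 0 ≤ G(Θ̂_λ) − G(Θ̂_G) ≤ ρ(‖Θ̂_λ‖₁ − ‖Ẑ_λ‖₁). -/
open scoped Matrix

theorem frobNorm_sub_self {d : ℕ} (A : Matrix (Fin d) (Fin d) ℝ) : frobNorm (A - A) = 0 := by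
  simp [frobNorm]

theorem stmt_15_general {d : ℕ} (S : Matrix (Fin d) (Fin d) ℝ) (ρ lam : ℝ)
    (hlam : 0 < lam)
    (G : Matrix (Fin d) (Fin d) ℝ → ℝ)
    (hG : ∀ Θ, G Θ = -Real.log Θ.det + (S * Θ).trace + ρ * l1Norm Θ)
    (f : Matrix (Fin d) (Fin d) ℝ → Matrix (Fin d) (Fin d) ℝ → ℝ)
    (hf : ∀ Θ Z, f Θ Z = -Real.log Θ.det + (S * Θ).trace + ρ * l1Norm Z +
        lam / 2 * (frobNorm (Z - Θ)) ^ 2)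
    (ΘG : Matrix (Fin d) (Fin d) ℝ) (hΘG : ΘG.PosDef)
    (hGmin : ∀ Θ : Matrix (Fin d) (Fin d) ℝ, Θ.PosDef → G ΘG ≤ G Θ)
    (Θl Zl : Matrix (Fin d) (Fin d) ℝ) (hΘl : Θl.PosDef)
    (hfmin : ∀ Θ Z : Matrix (Fin d) (Fin d) ℝ, Θ.PosDef → Z.PosDef → f Θl Zl ≤ f Θ Z) :
    0 ≤ G Θl - G ΘG ∧ G Θl - G ΘG ≤ ρ * (l1Norm Θl - l1Norm Zl) := by
  have f_diag : ∀ Θ, f Θ Θ = G Θ := fun Θ => by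
    rw [hf, hG, frobNorm_sub_self]; ring
  have f_ge : G Θl + ρ * (l1Norm Zl - l1Norm Θl) ≤ f Θl Zl := by
    rw [hf, hG]
    have : 0 ≤ lam / 2 * frobNorm (Zl - Θl) ^ 2 := by positivity
    linarith
  have f_le : f Θl Zl ≤ G ΘG := (hfmin ΘG ΘG hΘG hΘG).trans_eq (f_diag ΘG)
  exact ⟨sub_nonneg.2 (hGmin Θl hΘl), by linarith⟩

theorem stmt_15 {d : ℕ} (S : Matrix (Fin d) (Fin d) ℝ) (ρ lam : ℝ)
    (hρ : 0 ≤ ρ) (hlam : 0 < lam) (hS : S.IsHermitian)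
    (G : Matrix (Fin d) (Fin d) ℝ → ℝ)
    (hG : ∀ Θ, G Θ = -Real.log Θ.det + (S * Θ).trace + ρ * l1Norm Θ)
    (f : Matrix (Fin d) (Fin d) ℝ → Matrix (Fin d) (Fin d) ℝ → ℝ)
    (hf : ∀ Θ Z, f Θ Z = -Real.log Θ.det + (S * Θ).trace + ρ * l1Norm Z +
        lam / 2 * (frobNorm (Z - Θ)) ^ 2)
    (ΘG : Matrix (Fin d) (Fin d) ℝ) (hΘG : ΘG.PosDef)
    (hGmin : ∀ Θ : Matrix (Fin d) (Fin d) ℝ, Θ.PosDef → G ΘG ≤ G Θ)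
    (Θl Zl : Matrix (Fin d) (Fin d) ℝ) (hΘl : Θl.PosDef) (hZl : Zl.PosDef)
    (hfmin : ∀ Θ Z : Matrix (Fin d) (Fin d) ℝ, Θ.PosDef → Z.PosDef → f Θl Zl ≤ f Θ Z) :
    0 ≤ G Θl - G ΘG ∧ G Θl - G ΘG ≤ ρ * (l1Norm Θl - l1Norm Zl) :=
  stmt_15_general S ρ lam hlam G hG f hf ΘG hΘG hGmin Θl Zl hΘl hfmin
end
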